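/- Let m and n be integers with 1 ≤ m ≤ n, and let p be a complex polynomial of the form p(z) = z^m·∏_{k=1}^{n-m}(z − z_k), where z_1, …, z_{n-m} are complex numbers with |z_k| ≥ 1 for all k. Then p' has no zero z with 0 < |z| < m/n. -/

import Mathlib

open Polynomial Finset

private lemma polyDerivFinsetProd {ι : Type*} [DecidableEq ι] (s : Finset ι)
    (f : ι → Polynomial ℂ) :
    Polynomial.derivative (∏ i ∈ s, f i)
      = ∑ i ∈ s, (∏ j ∈ s.erase i, f j) * Polynomial.derivative (f i) := by
  induction s using Finset.induction_on with
  | empty => simp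
  | @insert a s ha ih =>
    rw [Finset.prod_insert ha, Polynomial.derivative_mul, ih, Finset.sum_insert ha,
      Finset.erase_insert ha, Finset.mul_sum]
    congr 1
    · ring
    · refine Finset.sum_congr rfl fun i hi => ?_
      have hia : i ≠ a := fun h => ha (h ▸ hi)
      rw [Finset.erase_insert_of_ne hia.symm,
        Finset.prod_insert (fun h => ha (Finset.mem_of_mem_erase h))]
      ring

theorem aziz_zargar_multiple_zero (m n : ℕ) (hm : 1 ≤ m) (hmn : m ≤ n)
    (z : Fin (n - m) → ℂ) (hz : ∀ k, 1 ≤ ‖z k‖) :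
    ∀ w : ℂ, 0 < ‖w‖ → ‖w‖ < (m : ℝ) / n →
      (Polynomial.derivative
        (Polynomial.X ^ m * ∏ k, (Polynomial.X - Polynomial.C (z k)))).eval w ≠ 0 := by
  intro w hw0 hwmn
  have hn0 : 0 < (n : ℝ) := by
    have : 1 ≤ n := le_trans hm hmn
    exact_mod_cast this
  set r := ‖w‖ with hr
  have hrlt1 : r < 1 := lt_of_lt_of_le hwmn (by
    rw [div_le_one hn0]; exact_mod_cast hmn)
  have hsub : ∀ k, 1 - r ≤ ‖w - z k‖ := by
    intro k
    have h1 : ‖z k‖ ≤ ‖w - z k‖ + ‖w‖ := by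
      calc ‖z k‖ = ‖(z k - w) + w‖ := by ring_nf
        _ ≤ ‖z k - w‖ + ‖w‖ := norm_add_le _ _
        _ = ‖w - z k‖ + ‖w‖ := by
            rw [← norm_neg (z k - w), neg_sub]
    have := hz k
    linarith
  have h1r : (0:ℝ) < 1 - r := by linarith
  have hne : ∀ k, w - z k ≠ 0 := by
    intro k h
    have := hsub k
    rw [h] at this
    simp at this; linarith
  have hQw : (∏ k, (w - z k)) ≠ 0 := Finset.prod_ne_zero_iff.mpr fun k _ => hne k
  have hQ' : (derivative (∏ k, (X - C (z k)))).eval w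
      = ∑ k, ∏ j ∈ Finset.univ.erase k, (w - z j) := by
    rw [polyDerivFinsetProd]
    simp [eval_finset_sum, eval_prod]
  have hkey : (derivative (X ^ m * ∏ k : Fin (n-m), (X - C (z k)))).eval w
      = w ^ (m-1) * ((∏ k, (w - z k)) * ((m : ℂ) + w * ∑ k, (w - z k)⁻¹)) := by
    rw [derivative_mul, derivative_X_pow]
    simp only [eval_add, eval_mul, eval_pow, eval_X, eval_C, eval_prod, eval_sub, hQ']
    have hwm : w ^ m = w * w ^ (m - 1) := by
      conv_lhs => rw [show m = m - 1 + 1 by omega]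
      ring
    have hS : (∏ k, (w - z k)) * ∑ k, (w - z k)⁻¹
        = ∑ k, ∏ j ∈ Finset.univ.erase k, (w - z j) := by
      rw [Finset.mul_sum]
      refine Finset.sum_congr rfl fun k _ => ?_
      rw [← Finset.mul_prod_erase _ _ (Finset.mem_univ k)]
      rw [mul_comm (w - z k), mul_assoc, mul_inv_cancel₀ (hne k), mul_one]
    rw [hwm, ← hS]
    ring
  rw [hkey]
  have hwne : w ≠ 0 := by
    intro h
    have : r ≠ 0 := ne_of_gt hw0
    exact this (by rw [hr, h, norm_zero])
  refine mul_ne_zero (pow_ne_zero _ hwne) (mul_ne_zero hQw ?_)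
  intro habs
  have hS : ‖w * ∑ k, (w - z k)⁻¹‖ < m := by
    have hbound : ‖∑ k, (w - z k)⁻¹‖ ≤ ((n:ℝ) - m) * (1 - r)⁻¹ := by
      calc ‖∑ k, (w - z k)⁻¹‖
          ≤ ∑ k, ‖(w - z k)⁻¹‖ := norm_sum_le _ _
        _ ≤ ∑ _k : Fin (n-m), (1 - r)⁻¹ := by
            refine Finset.sum_le_sum fun k _ => ?_
            rw [norm_inv]
            exact inv_anti₀ h1r (hsub k)
        _ = ((n:ℝ) - m) * (1 - r)⁻¹ := by
            rw [Finset.sum_const, Finset.card_univ, Fintype.card_fin,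
              nsmul_eq_mul, Nat.cast_sub hmn]
    have hrn : r * n < m := (lt_div_iff₀ hn0).mp hwmn
    have hmain : r * (((n:ℝ) - m) * (1 - r)⁻¹) < m := by
      rw [show r * (((n:ℝ) - m) * (1 - r)⁻¹) = (r * ((n:ℝ) - m)) / (1 - r) by ring,
        div_lt_iff₀ h1r]
      nlinarith
    calc ‖w * ∑ k, (w - z k)⁻¹‖
        = r * ‖∑ k, (w - z k)⁻¹‖ := by rw [norm_mul]
      _ ≤ r * (((n:ℝ) - m) * (1 - r)⁻¹) :=
          mul_le_mul_of_nonneg_left hbound (norm_nonneg w)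
      _ < m := hmain
  have hEq : ‖w * ∑ k, (w - z k)⁻¹‖ = m := by
    rw [eq_neg_of_add_eq_zero_right habs, norm_neg]
    simp
  rw [hEq] at hS
  exact lt_irrefl _ hS
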